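/- Let M_{ij} be a symmetric interaction matrix on a finite lattice Λ ⊂ ℤ^d with |M_{kn}| ≤ C(1+|k-n|)^{-(d+α)} for α ∈ (0,1], and suppose cov(m,n) ≥ 0 satisfies cov(m,n) ≤ C'(1+|m-n|)^{-(d+β)} for some β > 0. Define J_{mk} = Σ_{n ∉ B_L(m)} |M_{kn}| cov(m,n) for k ∈ B_L(m) and J_{mk} = Σ_{n ∈ B_L(m)} |M_{kn}| cov(m,n) for k ∉ B_L(m). Then Σ_k J_{mk} → 0 as L → ∞, uniformly in m; in particular, for L large enough (depending only on C, C', d, α, β), Σ_k J_{mk} ≤ 1/2 for all m. -/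

import Mathlib

/-!
A pair `(k, n)` contributing to `∑ k, J m k` straddles the boundary of the box `B_L(m)`, so by
the triangle inequality either `‖n - m‖ > L / 2` or `‖k - n‖ > L / 2`. With the decay profiles
`a x = C (1 + ‖x‖)^(-(d+α))` and `b x = C' (1 + ‖x‖)^(-(d+β))`, pairs of the first kind contribute
at most `(∑ a) · (tail of b beyond L / 2)` and pairs of the second kind at most
`(∑ b) · (tail of a beyond L / 2)`. Both tails vanish as `L → ∞`, uniformly in `Λ` and `m`,
because `(1 + ‖x‖)^(-s)` is summable on `ℤ^d` for `s > d`: it is dominated by the product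
`∏ i, (1 + |x i|)^(-s/d)` of one-dimensional `p`-series.
-/

open Classical in
/-- The auxiliary kernel `J` of the bootstrapping argument: for `k` inside the box
`B_L(m)` one sums the interaction against the covariance over sites outside the box,
and for `k` outside the box over the sites inside the box. -/
noncomputable def Jker (d : ℕ) (Λ : Finset (Fin d → ℤ))
    (M cov : (Fin d → ℤ) → (Fin d → ℤ) → ℝ) (L : ℝ) (m k : Fin d → ℤ) : ℝ :=
  if ‖k - m‖ ≤ L then
    ∑ n ∈ Λ.filter fun n => ¬ ‖n - m‖ ≤ L, |M k n| * cov m n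
  else
    ∑ n ∈ Λ.filter fun n => ‖n - m‖ ≤ L, |M k n| * cov m n

open Finset Filter Topology

lemma summable_pi_prod {ι α : Type*} [Fintype ι] {v : α → ℝ} (hv0 : 0 ≤ v)
    (hv : Summable v) : Summable fun n : ι → α => ∏ i, v (n i) := by
  classical
  refine summable_of_sum_le (c := (∑' t, v t) ^ Fintype.card ι)
    (fun n => prod_nonneg fun i _ => hv0 _) fun s => ?_
  set t := univ.biUnion fun i => s.image (· i)
  calc ∑ n ∈ s, ∏ i, v (n i)
      ≤ ∑ n ∈ Fintype.piFinset fun _ => t, ∏ i, v (n i) :=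
        sum_le_sum_of_subset_of_nonneg
          (fun n hn => Fintype.mem_piFinset.2 fun i => mem_biUnion.2
            ⟨i, mem_univ _, mem_image_of_mem _ hn⟩)
          fun n _ _ => prod_nonneg fun i _ => hv0 _
    _ = (∑ x ∈ t, v x) ^ Fintype.card ι := by rw [sum_prod_piFinset, prod_const, card_univ]
    _ ≤ (∑' x, v x) ^ Fintype.card ι := by
        gcongr
        · exact sum_nonneg fun x _ => hv0 x
        · exact hv.sum_le_tsum _ fun x _ => hv0 x

lemma summable_one_add_abs_int_rpow_neg {p : ℝ} (hp : 1 < p) :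
    Summable fun t : ℤ => (1 + |(t : ℝ)|) ^ (-p) := by
  have h : Summable fun n : ℕ => (1 + (n : ℝ)) ^ (-p) := by
    simpa [add_comm] using
      (summable_nat_add_iff 1).2 (Real.summable_nat_rpow.2 (by linarith : -p < -1))
  rw [summable_int_iff_summable_nat_and_neg]
  simpa using And.intro h h

lemma summable_one_add_norm_rpow_neg {ι : Type*} [Fintype ι] {s : ℝ}
    (hs : (Fintype.card ι : ℝ) < s) : Summable fun x : ι → ℤ => (1 + ‖x‖) ^ (-s) := by
  rcases isEmpty_or_nonempty ι with hι | hι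
  · exact .of_finite
  have hcard : (0 : ℝ) < Fintype.card ι := by exact_mod_cast Fintype.card_pos
  set p := s / Fintype.card ι
  have hp : 1 < p := (one_lt_div hcard).2 hs
  refine (summable_pi_prod (fun t => by positivity)
    (summable_one_add_abs_int_rpow_neg hp)).of_nonneg_of_le (fun x => by positivity) fun x => ?_
  calc (1 + ‖x‖) ^ (-s) = ∏ _i : ι, (1 + ‖x‖) ^ (-p) := by
        rw [prod_const, card_univ, ← Real.rpow_mul_natCast (by positivity), neg_mul,
          div_mul_cancel₀ _ hcard.ne']
    _ ≤ ∏ i, (1 + |((x i : ℤ) : ℝ)|) ^ (-p) :=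
        prod_le_prod (fun i _ => by positivity) fun i _ =>
          Real.rpow_le_rpow_of_nonpos (by positivity)
            (by grw [← Int.norm_eq_abs, norm_le_pi_norm x i]) (by linarith)

section Tails

variable {G : Type*} [SeminormedAddCommGroup G] {h : G → ℝ}

lemma sum_comp_sub_le_tsum (h0 : 0 ≤ h) (hs : Summable h) (s : Finset G) (c : G) :
    ∑ x ∈ s, h (x - c) ≤ ∑' x, h x := by
  rw [← (Equiv.subRight c).tsum_eq]
  exact ((Equiv.subRight c).summable_iff.2 hs).sum_le_tsum _ fun x _ => h0 _

noncomputable def tailSum (h : G → ℝ) (R : ℝ) : ℝ :=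
  ∑' x, {y : G | R < ‖y‖}.indicator h x

lemma tailSum_nonneg (h0 : 0 ≤ h) (R : ℝ) : 0 ≤ tailSum h R :=
  tsum_nonneg (Set.indicator_nonneg fun x _ => h0 x)

lemma sum_filter_comp_sub_le_tailSum (h0 : 0 ≤ h) (hs : Summable h) (s : Finset G) (c : G)
    (R : ℝ) : ∑ x ∈ s with R < ‖x - c‖, h (x - c) ≤ tailSum h R := by
  unfold tailSum
  simpa only [sum_filter, Set.indicator_apply, Set.mem_ofPred_eq] using
    sum_comp_sub_le_tsum (Set.indicator_nonneg fun x _ => h0 x) (hs.indicator {y | R < ‖y‖}) s c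

lemma tendsto_tailSum (hs : Summable h) : Tendsto (tailSum h) atTop (𝓝 0) := by
  have hpointwise (x : G) : Tendsto (fun R => {y : G | R < ‖y‖}.indicator h x) atTop (𝓝 0) := by
    refine tendsto_const_nhds.congr' ?_
    filter_upwards [eventually_ge_atTop ‖x‖] with R hR
    simp [Set.indicator_of_notMem, hR]
  unfold tailSum
  simpa using tendsto_tsum_of_dominated_convergence hs.abs hpointwise
    (.of_forall fun R x => norm_indicator_le_norm_self h x)

end Tails

lemma Finset.sum_filter_le_sum_filter_add_sum_filter {ι β : Type*} [AddCommMonoid β]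
    [PartialOrder β] [IsOrderedAddMonoid β] {s : Finset ι} {f : ι → β}
    {p q r : ι → Prop} [DecidablePred p] [DecidablePred q] [DecidablePred r]
    (hf : ∀ i ∈ s, 0 ≤ f i) (hpqr : ∀ i ∈ s, p i → q i ∨ r i) :
    ∑ i ∈ s with p i, f i ≤ ∑ i ∈ s with q i, f i + ∑ i ∈ s with r i, f i := by
  rw [sum_filter, sum_filter, sum_filter, ← sum_add_distrib]
  refine sum_le_sum fun i hi => ?_
  have := hf i hi
  have := hpqr i hi
  split_ifs <;> simp_all [le_add_of_nonneg_right, add_nonneg]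

lemma Jker_le (d : ℕ) (Λ : Finset (Fin d → ℤ)) (M cov : (Fin d → ℤ) → (Fin d → ℤ) → ℝ)
    (L : ℝ) (m k : Fin d → ℤ) (hcov0 : ∀ n, 0 ≤ cov m n) :
    Jker d Λ M cov L m k ≤ ∑ n ∈ Λ with L / 2 < ‖n - m‖, |M k n| * cov m n
      + ∑ n ∈ Λ with L / 2 < ‖k - n‖, |M k n| * cov m n := by
  have hw : ∀ n ∈ Λ, 0 ≤ |M k n| * cov m n := fun n _ => mul_nonneg (abs_nonneg _) (hcov0 n)
  unfold Jker
  split_ifs with hk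
  · refine sum_filter_le_sum_filter_add_sum_filter hw fun n _ hn => Or.inl ?_
    linarith [norm_nonneg (n - m)]
  · refine sum_filter_le_sum_filter_add_sum_filter hw fun n _ hn => ?_
    by_contra! hfar
    linarith [norm_sub_le_norm_sub_add_norm_sub k n m]

section Kernel

variable {G : Type*} [SeminormedAddCommGroup G] {a b : G → ℝ} {M cov : G → G → ℝ} {m : G}

lemma sum_sum_far_from_center_le (ha0 : 0 ≤ a) (ha : Summable a) (hb0 : 0 ≤ b)
    (hb : Summable b) (hM : ∀ k n, |M k n| ≤ a (k - n)) (hcov0 : ∀ n, 0 ≤ cov m n)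
    (hcov : ∀ n, cov m n ≤ b (n - m)) (Λ : Finset G) (R : ℝ) :
    ∑ k ∈ Λ, ∑ n ∈ Λ with R < ‖n - m‖, |M k n| * cov m n ≤ (∑' x, a x) * tailSum b R := by
  rw [sum_comm]
  calc ∑ n ∈ Λ with R < ‖n - m‖, ∑ k ∈ Λ, |M k n| * cov m n
      = ∑ n ∈ Λ with R < ‖n - m‖, (∑ k ∈ Λ, |M k n|) * cov m n := by simp_rw [sum_mul]
    _ ≤ ∑ n ∈ Λ with R < ‖n - m‖, (∑' x, a x) * b (n - m) :=
        sum_le_sum fun n _ => mul_le_mul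
          ((sum_le_sum fun k _ => hM k n).trans (sum_comp_sub_le_tsum ha0 ha Λ n))
          (hcov n) (hcov0 n) (tsum_nonneg ha0)
    _ ≤ (∑' x, a x) * tailSum b R := by
        rw [← mul_sum]
        gcongr
        · exact tsum_nonneg ha0
        · exact sum_filter_comp_sub_le_tailSum hb0 hb Λ m R

lemma sum_sum_far_from_diagonal_le (ha0 : 0 ≤ a) (ha : Summable a) (hb0 : 0 ≤ b)
    (hb : Summable b) (hM : ∀ k n, |M k n| ≤ a (k - n)) (hcov0 : ∀ n, 0 ≤ cov m n)
    (hcov : ∀ n, cov m n ≤ b (n - m)) (Λ : Finset G) (R : ℝ) :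
    ∑ k ∈ Λ, ∑ n ∈ Λ with R < ‖k - n‖, |M k n| * cov m n ≤ (∑' x, b x) * tailSum a R := by
  simp_rw [sum_filter]
  rw [sum_comm]
  calc ∑ n ∈ Λ, ∑ k ∈ Λ, (if R < ‖k - n‖ then |M k n| * cov m n else 0)
      = ∑ n ∈ Λ, (∑ k ∈ Λ with R < ‖k - n‖, |M k n|) * cov m n := by
        simp_rw [sum_filter, sum_mul, ite_mul, zero_mul]
    _ ≤ ∑ n ∈ Λ, tailSum a R * b (n - m) :=
        sum_le_sum fun n _ => mul_le_mul
          ((sum_le_sum fun k _ => hM k n).trans (sum_filter_comp_sub_le_tailSum ha0 ha Λ n R))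
          (hcov n) (hcov0 n) (tailSum_nonneg ha0 R)
    _ ≤ (∑' x, b x) * tailSum a R := by
        rw [← mul_sum, mul_comm]
        gcongr
        · exact tailSum_nonneg ha0 R
        · exact sum_comp_sub_le_tsum hb0 hb Λ m

end Kernel

lemma sum_Jker_le {d : ℕ} {a b : (Fin d → ℤ) → ℝ} (ha : Summable a) (hb : Summable b)
    {Λ : Finset (Fin d → ℤ)} {M cov : (Fin d → ℤ) → (Fin d → ℤ) → ℝ} {m : Fin d → ℤ}
    (hM : ∀ k n, |M k n| ≤ a (k - n)) (hcov0 : ∀ n, 0 ≤ cov m n)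
    (hcov : ∀ n, cov m n ≤ b (n - m)) (L : ℝ) :
    ∑ k ∈ Λ, Jker d Λ M cov L m k ≤
      (∑' x, a x) * tailSum b (L / 2) + (∑' x, b x) * tailSum a (L / 2) := by
  have ha0 : 0 ≤ a := fun x => by simpa using (abs_nonneg (M x 0)).trans (hM x 0)
  have hb0 : 0 ≤ b := fun x => by simpa using (hcov0 (x + m)).trans (hcov (x + m))
  calc ∑ k ∈ Λ, Jker d Λ M cov L m k
      ≤ ∑ k ∈ Λ, (∑ n ∈ Λ with L / 2 < ‖n - m‖, |M k n| * cov m n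
          + ∑ n ∈ Λ with L / 2 < ‖k - n‖, |M k n| * cov m n) :=
        sum_le_sum fun k _ => Jker_le d Λ M cov L m k hcov0
    _ ≤ _ := by
        rw [sum_add_distrib]
        exact add_le_add (sum_sum_far_from_center_le ha0 ha hb0 hb hM hcov0 hcov Λ _)
          (sum_sum_far_from_diagonal_le ha0 ha hb0 hb hM hcov0 hcov Λ _)

theorem Jker_small_general (d : ℕ) (α β C C' : ℝ)
    (hα : 0 < α) (hβ : 0 < β) :
    (∀ ε : ℝ, 0 < ε → ∃ L₀ : ℝ, ∀ L : ℝ, L₀ ≤ L →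
      ∀ (Λ : Finset (Fin d → ℤ)) (M cov : (Fin d → ℤ) → (Fin d → ℤ) → ℝ),
        (∀ k n, M k n = M n k) →
        (∀ k n, |M k n| ≤ C * (1 + ‖k - n‖) ^ (-((d : ℝ) + α))) →
        (∀ m n, 0 ≤ cov m n) →
        (∀ m n, cov m n ≤ C' * (1 + ‖m - n‖) ^ (-((d : ℝ) + β))) →
        ∀ m ∈ Λ, ∑ k ∈ Λ, Jker d Λ M cov L m k ≤ ε) ∧
    (∃ L₀ : ℝ, ∀ L : ℝ, L₀ ≤ L →
      ∀ (Λ : Finset (Fin d → ℤ)) (M cov : (Fin d → ℤ) → (Fin d → ℤ) → ℝ),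
        (∀ k n, M k n = M n k) →
        (∀ k n, |M k n| ≤ C * (1 + ‖k - n‖) ^ (-((d : ℝ) + α))) →
        (∀ m n, 0 ≤ cov m n) →
        (∀ m n, cov m n ≤ C' * (1 + ‖m - n‖) ^ (-((d : ℝ) + β))) →
        ∀ m ∈ Λ, ∑ k ∈ Λ, Jker d Λ M cov L m k ≤ 1 / 2) := by
  set a : (Fin d → ℤ) → ℝ := fun x => C * (1 + ‖x‖) ^ (-((d : ℝ) + α))
  set b : (Fin d → ℤ) → ℝ := fun x => C' * (1 + ‖x‖) ^ (-((d : ℝ) + β))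
  have ha : Summable a := (summable_one_add_norm_rpow_neg (by simpa using hα)).mul_left C
  have hb : Summable b := (summable_one_add_norm_rpow_neg (by simpa using hβ)).mul_left C'
  have hbound : Tendsto
      (fun L => (∑' x, a x) * tailSum b (L / 2) + (∑' x, b x) * tailSum a (L / 2)) atTop (𝓝 0) := by
    simpa [Function.comp_def] using (((tendsto_tailSum hb).const_mul (∑' x, a x)).add
      ((tendsto_tailSum ha).const_mul (∑' x, b x))).comp (tendsto_id.atTop_div_const two_pos)
  refine (fun h => ⟨h, h _ one_half_pos⟩) fun ε hε => ?_
  obtain ⟨L₀, hL₀⟩ := eventually_atTop.1 (hbound.eventually (ge_mem_nhds hε))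
  refine ⟨L₀, fun L hL Λ M cov _ hM hcov0 hcov m _ =>
    (sum_Jker_le ha hb hM (hcov0 m) (fun n => ?_) L).trans (hL₀ L hL)⟩
  simpa [b, norm_sub_rev] using hcov m n

theorem Jker_small (d : ℕ) (hd : 1 ≤ d) (α β C C' : ℝ)
    (hα : 0 < α) (hα1 : α ≤ 1) (hβ : 0 < β) (hC : 0 < C) (hC' : 0 < C') :
    (∀ ε : ℝ, 0 < ε → ∃ L₀ : ℝ, ∀ L : ℝ, L₀ ≤ L →
      ∀ (Λ : Finset (Fin d → ℤ)) (M cov : (Fin d → ℤ) → (Fin d → ℤ) → ℝ),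
        (∀ k n, M k n = M n k) →
        (∀ k n, |M k n| ≤ C * (1 + ‖k - n‖) ^ (-((d : ℝ) + α))) →
        (∀ m n, 0 ≤ cov m n) →
        (∀ m n, cov m n ≤ C' * (1 + ‖m - n‖) ^ (-((d : ℝ) + β))) →
        ∀ m ∈ Λ, ∑ k ∈ Λ, Jker d Λ M cov L m k ≤ ε) ∧
    (∃ L₀ : ℝ, ∀ L : ℝ, L₀ ≤ L →
      ∀ (Λ : Finset (Fin d → ℤ)) (M cov : (Fin d → ℤ) → (Fin d → ℤ) → ℝ),
        (∀ k n, M k n = M n k) →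
        (∀ k n, |M k n| ≤ C * (1 + ‖k - n‖) ^ (-((d : ℝ) + α))) →
        (∀ m n, 0 ≤ cov m n) →
        (∀ m n, cov m n ≤ C' * (1 + ‖m - n‖) ^ (-((d : ℝ) + β))) →
        ∀ m ∈ Λ, ∑ k ∈ Λ, Jker d Λ M cov L m k ≤ 1 / 2) :=
  Jker_small_general d α β C C' hα hβ
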